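/- arXiv:2001.09284 — 4 statements merged into one kernel-verified Lean document; each statement's English description precedes it below -/
import Mathlib

section
/- Let s, p ≥ 1, let W_t ∈ ℝ^{s×2} and W_c ∈ ℝ^{s×p} be real matrices, let Σ_t ∈ ℝ^{2×2} and Σ_c ∈ ℝ^{p×p} be symmetric positive definite matrices, and let σ_v > 0. Define Σ_X = W_t Σ_t W_tᵀ + W_c Σ_c W_cᵀ + σ_v² I_s and C_X = W_t Σ_t W_tᵀ + σ_v² I_s (both are positive definite, hence invertible), and set K_nocal = Σ_t W_tᵀ Σ_X⁻¹ and K_cal = Σ_t W_tᵀ C_X⁻¹. If W_tᵀ W_c = 0, then K_nocal = K_cal. -/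
/-!
The orthogonality `Wtᵀ Wc = 0` kills both products of `Wt St Wtᵀ` and `Wc Sc Wcᵀ`, so the
subject term is invisible to `Wtᵀ` (`Wtᵀ ΣX = Wtᵀ CX`) and `ΣX`, `CX` commute. For commuting
invertible `S`, `C`, the identity `A S = A C` passes to the inverses:
`A S⁻¹ = A C C⁻¹ S⁻¹ = A C S⁻¹ C⁻¹ = A S S⁻¹ C⁻¹ = A C⁻¹`.
-/

open Matrix

namespace Matrix

variable {m n k : Type*} [Fintype n]

theorem mul_nonsing_inv_eq_of_commute [DecidableEq n] {R : Type*} [CommRing R]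
    {A : Matrix m n R} {S C : Matrix n n R} (hS : IsUnit S.det) (hC : IsUnit C.det)
    (hSC : Commute S C) (h : A * S = A * C) : A * S⁻¹ = A * C⁻¹ := by
  have hinv : C⁻¹ * S⁻¹ = S⁻¹ * C⁻¹ := by rw [← mul_inv_rev, ← mul_inv_rev, hSC.eq]
  calc A * S⁻¹ = A * C * (C⁻¹ * S⁻¹) := by
        rw [← Matrix.mul_assoc, Matrix.mul_assoc A, mul_nonsing_inv C hC, Matrix.mul_one]
    _ = A * S * (S⁻¹ * C⁻¹) := by rw [hinv, h]
    _ = A * C⁻¹ := by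
        rw [← Matrix.mul_assoc, Matrix.mul_assoc A, mul_nonsing_inv S hS, Matrix.mul_one]

variable [Fintype m]

theorem PosSemidef.mul_mul_transpose_same {X : Matrix m m ℝ} (hX : X.PosSemidef)
    (A : Matrix n m ℝ) : (A * X * Aᵀ).PosSemidef := by
  simpa using hX.mul_mul_conjTranspose_same A

variable [Fintype k] {R : Type*} [CommRing R]

theorem mul_mul_transpose_mul_eq_zero {A : Matrix n m R} {B : Matrix n k R}
    (hAB : Aᵀ * B = 0) (X : Matrix m m R) (Y : Matrix k k R) :
    A * X * Aᵀ * (B * Y * Bᵀ) = 0 := by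
  simp only [Matrix.mul_assoc, ← Matrix.mul_assoc Aᵀ B, hAB, Matrix.zero_mul, Matrix.mul_zero]

theorem commute_mul_mul_transpose {A : Matrix n m R} {B : Matrix n k R}
    (hAB : Aᵀ * B = 0) (X : Matrix m m R) (Y : Matrix k k R) :
    Commute (A * X * Aᵀ) (B * Y * Bᵀ) := by
  have hBA : Bᵀ * A = 0 := by rw [← transpose_transpose A, ← transpose_mul, hAB, transpose_zero]
  exact (mul_mul_transpose_mul_eq_zero hAB X Y).trans
    (mul_mul_transpose_mul_eq_zero hBA Y X).symm

end Matrix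

theorem stmt_0_general {s p : ℕ}
    (Wt : Matrix (Fin s) (Fin 2) ℝ) (Wc : Matrix (Fin s) (Fin p) ℝ)
    (St : Matrix (Fin 2) (Fin 2) ℝ) (Sc : Matrix (Fin p) (Fin p) ℝ)
    (hSt : St.PosDef) (hSc : Sc.PosDef)
    (σv : ℝ) (hσv : 0 < σv)
    (SX CX : Matrix (Fin s) (Fin s) ℝ)
    (hSX : SX = Wt * St * Wtᵀ + Wc * Sc * Wcᵀ + σv ^ 2 • (1 : Matrix (Fin s) (Fin s) ℝ))
    (hCX : CX = Wt * St * Wtᵀ + σv ^ 2 • (1 : Matrix (Fin s) (Fin s) ℝ))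
    (horth : Wtᵀ * Wc = 0) :
    St * Wtᵀ * SX⁻¹ = St * Wtᵀ * CX⁻¹ := by
  have hP := hSt.posSemidef.mul_mul_transpose_same Wt
  have hM := hSc.posSemidef.mul_mul_transpose_same Wc
  have hnoise : (σv ^ 2 • (1 : Matrix (Fin s) (Fin s) ℝ)).PosDef := PosDef.one.smul (by positivity)
  have hCXpd : CX.PosDef := hCX ▸ PosDef.posSemidef_add hP hnoise
  have hSXpd : SX.PosDef := hSX ▸ PosDef.posSemidef_add (hP.add hM) hnoise
  rw [add_right_comm] at hSX
  have hcomm : Commute SX CX := by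
    rw [hSX, ← hCX]
    refine (Commute.refl CX).add_left ?_
    rw [hCX]
    exact (commute_mul_mul_transpose horth St Sc).symm.add_right
      ((Commute.one_right _).smul_right _)
  have hgaze : Wtᵀ * SX = Wtᵀ * CX := by
    rw [hSX, ← hCX, Matrix.mul_add, ← Matrix.mul_assoc, ← Matrix.mul_assoc, horth,
      Matrix.zero_mul, Matrix.zero_mul, add_zero]
  rw [Matrix.mul_assoc, Matrix.mul_assoc,
    mul_nonsing_inv_eq_of_commute hSXpd.det_pos.ne'.isUnit hCXpd.det_pos.ne'.isUnit hcomm hgaze]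

/-- **Theorem 1 (paper):** if gaze-dependent and subject-dependent appearance variations
are orthogonal (`Wtᵀ * Wc = 0`), the optimal linear gaze estimator without calibration
`K_nocal = Σt Wtᵀ ΣX⁻¹` equals the optimal estimator with ideal calibration
`K_cal = Σt Wtᵀ CX⁻¹`. -/
theorem stmt_0 {s p : ℕ} (hs : 1 ≤ s) (hp : 1 ≤ p)
    (Wt : Matrix (Fin s) (Fin 2) ℝ) (Wc : Matrix (Fin s) (Fin p) ℝ)
    (St : Matrix (Fin 2) (Fin 2) ℝ) (Sc : Matrix (Fin p) (Fin p) ℝ)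
    (hSt : St.PosDef) (hSc : Sc.PosDef)
    (σv : ℝ) (hσv : 0 < σv)
    (SX CX : Matrix (Fin s) (Fin s) ℝ)
    (hSX : SX = Wt * St * Wtᵀ + Wc * Sc * Wcᵀ + σv ^ 2 • (1 : Matrix (Fin s) (Fin s) ℝ))
    (hCX : CX = Wt * St * Wtᵀ + σv ^ 2 • (1 : Matrix (Fin s) (Fin s) ℝ))
    (horth : Wtᵀ * Wc = 0) :
    St * Wtᵀ * SX⁻¹ = St * Wtᵀ * CX⁻¹ :=
  stmt_0_general Wt Wc St Sc hSt hSc σv hσv SX CX hSX hCX horth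
end

section
/- Let s, p ≥ 1, let W_t ∈ ℝ^{s×2} and W_c ∈ ℝ^{s×p}, let Σ_t ∈ ℝ^{2×2} and Σ_c ∈ ℝ^{p×p} be symmetric positive definite, and let σ_v > 0. If W_tᵀ W_c = 0, then the inverse of Σ_X = W_t Σ_t W_tᵀ + W_c Σ_c W_cᵀ + σ_v² I_s is given by Σ_X⁻¹ = σ_v⁻² ( I_s − W_t (σ_v² Σ_t⁻¹ + W_tᵀ W_t)⁻¹ W_tᵀ − W_c (σ_v² Σ_c⁻¹ + W_cᵀ W_c)⁻¹ W_cᵀ ). -/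
/-!
Push-through identity: since `S (c S⁻¹ + WᵀW) = S WᵀW + c`, multiplying `ΣX` by
`W (c S⁻¹ + WᵀW)⁻¹ Wᵀ` gives back the signal covariance `W S Wᵀ`. Orthogonality `Wtᵀ Wc = 0`
makes the other signal term annihilate `W`, hence `ΣX` times the claimed inverse is
`σv⁻² (ΣX − Wt St Wtᵀ − Wc Sc Wcᵀ) = 1`.
-/

open Matrix

namespace Matrix

section PushThrough

variable {m k l R : Type*} [Fintype m] [Fintype k] [Fintype l] [DecidableEq k]
  [CommRing R]

theorem mul_add_smul_one_mul_smul_inv_add_transpose_mul_inv {S : Matrix k k R}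
    (W : Matrix m k R) (c : R) (hS : IsUnit S.det) (hA : IsUnit (c • S⁻¹ + Wᵀ * W).det) :
    (S * (Wᵀ * W) + c • 1) * (c • S⁻¹ + Wᵀ * W)⁻¹ = S := by
  have hSA : S * (c • S⁻¹ + Wᵀ * W) = S * (Wᵀ * W) + c • 1 := by
    rw [Matrix.mul_add, Matrix.mul_smul, mul_nonsing_inv _ hS, add_comm]
  rw [← hSA, mul_nonsing_inv_cancel_right _ _ hA]

theorem add_add_smul_one_mul_of_transpose_mul_eq_zero [DecidableEq m] (W : Matrix m k R)
    (S : Matrix k k R) {V : Matrix m l R} (T : Matrix l l R) (c : R) (hVW : Vᵀ * W = 0) :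
    (W * S * Wᵀ + V * T * Vᵀ + c • 1) * W = W * (S * (Wᵀ * W) + c • 1) := by
  simp only [Matrix.add_mul, Matrix.mul_add, Matrix.mul_assoc, hVW, Matrix.mul_zero,
    add_zero, smul_mul, Matrix.one_mul, Matrix.mul_smul, Matrix.mul_one]

theorem add_add_smul_one_mul_smul_inv_add_transpose_mul_inv [DecidableEq m] {W : Matrix m k R}
    {S : Matrix k k R} {V : Matrix m l R} (T : Matrix l l R) {c : R} (hVW : Vᵀ * W = 0)
    (hS : IsUnit S.det) (hA : IsUnit (c • S⁻¹ + Wᵀ * W).det) :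
    (W * S * Wᵀ + V * T * Vᵀ + c • 1) * (W * (c • S⁻¹ + Wᵀ * W)⁻¹ * Wᵀ) = W * S * Wᵀ := by
  rw [← Matrix.mul_assoc, ← Matrix.mul_assoc,
    add_add_smul_one_mul_of_transpose_mul_eq_zero W S T c hVW, Matrix.mul_assoc W,
    mul_add_smul_one_mul_smul_inv_add_transpose_mul_inv W c hS hA]

end PushThrough

theorem PosDef.smul_inv_add_transpose_mul_self {k m : Type*} [Fintype k] [Fintype m]
    [DecidableEq k] {S : Matrix k k ℝ} (hS : S.PosDef) (W : Matrix m k ℝ) {c : ℝ} (hc : 0 < c) :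
    (c • S⁻¹ + Wᵀ * W).PosDef :=
  (hS.inv.smul hc).add_posSemidef <| by
    simpa only [conjTranspose_eq_transpose_of_trivial] using posSemidef_conjTranspose_mul_self W

end Matrix

theorem stmt_1_general {s p : ℕ}
    (Wt : Matrix (Fin s) (Fin 2) ℝ) (Wc : Matrix (Fin s) (Fin p) ℝ)
    (St : Matrix (Fin 2) (Fin 2) ℝ) (Sc : Matrix (Fin p) (Fin p) ℝ)
    (hSt : St.PosDef) (hSc : Sc.PosDef)
    (σv : ℝ) (hσv : 0 < σv)
    (horth : Wtᵀ * Wc = 0) :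
    (Wt * St * Wtᵀ + Wc * Sc * Wcᵀ + σv ^ 2 • (1 : Matrix (Fin s) (Fin s) ℝ))⁻¹ =
      (σv ^ 2)⁻¹ • ((1 : Matrix (Fin s) (Fin s) ℝ)
        - Wt * (σv ^ 2 • St⁻¹ + Wtᵀ * Wt)⁻¹ * Wtᵀ
        - Wc * (σv ^ 2 • Sc⁻¹ + Wcᵀ * Wc)⁻¹ * Wcᵀ) := by
  have hσ : (0 : ℝ) < σv ^ 2 := by positivity
  have horth' : Wcᵀ * Wt = 0 := by
    rw [← transpose_transpose Wt, ← transpose_mul, horth, transpose_zero]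
  have hMt := add_add_smul_one_mul_smul_inv_add_transpose_mul_inv Sc horth'
    hSt.det_pos.ne'.isUnit (hSt.smul_inv_add_transpose_mul_self Wt hσ).det_pos.ne'.isUnit
  have hMc := add_add_smul_one_mul_smul_inv_add_transpose_mul_inv St horth
    hSc.det_pos.ne'.isUnit (hSc.smul_inv_add_transpose_mul_self Wc hσ).det_pos.ne'.isUnit
  rw [add_comm (Wc * Sc * Wcᵀ)] at hMc
  refine inv_eq_right_inv ?_
  rw [Matrix.mul_smul, Matrix.mul_sub, Matrix.mul_sub, Matrix.mul_one, hMt, hMc, sub_sub,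
    add_sub_cancel_left, inv_smul_smul₀ hσ.ne']

/-- Key inverse-covariance computation in the proof of Theorem 1: under the
orthogonality condition `Wtᵀ * Wc = 0`, the inverse of
`ΣX = Wt Σt Wtᵀ + Wc Σc Wcᵀ + σv² I` is
`σv⁻² (I − Wt (σv² Σt⁻¹ + Wtᵀ Wt)⁻¹ Wtᵀ − Wc (σv² Σc⁻¹ + Wcᵀ Wc)⁻¹ Wcᵀ)`. -/
theorem stmt_1 {s p : ℕ} (hs : 1 ≤ s) (hp : 1 ≤ p)
    (Wt : Matrix (Fin s) (Fin 2) ℝ) (Wc : Matrix (Fin s) (Fin p) ℝ)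
    (St : Matrix (Fin 2) (Fin 2) ℝ) (Sc : Matrix (Fin p) (Fin p) ℝ)
    (hSt : St.PosDef) (hSc : Sc.PosDef)
    (σv : ℝ) (hσv : 0 < σv)
    (horth : Wtᵀ * Wc = 0) :
    (Wt * St * Wtᵀ + Wc * Sc * Wcᵀ + σv ^ 2 • (1 : Matrix (Fin s) (Fin s) ℝ))⁻¹ =
      (σv ^ 2)⁻¹ • ((1 : Matrix (Fin s) (Fin s) ℝ)
        - Wt * (σv ^ 2 • St⁻¹ + Wtᵀ * Wt)⁻¹ * Wtᵀ
        - Wc * (σv ^ 2 • Sc⁻¹ + Wcᵀ * Wc)⁻¹ * Wcᵀ) :=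
  stmt_1_general Wt Wc St Sc hSt hSc σv hσv horth
end

section
/- Let s, p ≥ 1, let W_t ∈ ℝ^{s×2} and W_c ∈ ℝ^{s×p} with W_tᵀ W_c = 0, let Σ_t ∈ ℝ^{2×2} be symmetric positive definite, and let σ_v > 0. Define K_cal = Σ_t W_tᵀ (W_t Σ_t W_tᵀ + σ_v² I_s)⁻¹. Then K_cal W_c = 0. -/
open Matrix

/-!
Since `Wtᵀ Wc = 0`, the matrix `M = Wt Σt Wtᵀ + σv² I` acts on the columns of `Wc` as the
scalar `σv²`, so `M⁻¹ Wc = σv⁻² Wc` (`M` is positive definite, hence invertible), and then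
`K_cal Wc = σv⁻² Σt Wtᵀ Wc = 0`.
-/

namespace Matrix

variable {m n k : Type*} [Fintype m] [Fintype n] [DecidableEq m]

lemma mul_mul_transpose_add_smul_one_mul_of_transpose_mul_eq_zero {R : Type*} [CommRing R]
    (W : Matrix m n R) (B : Matrix n n R) (c : R) {X : Matrix m k R} (h : Wᵀ * X = 0) :
    (W * B * Wᵀ + c • (1 : Matrix m m R)) * X = c • X := by
  rw [Matrix.add_mul, Matrix.mul_assoc, h, Matrix.mul_zero, smul_mul, Matrix.one_mul, zero_add]

lemma nonsing_inv_mul_eq_inv_smul_of_mul_eq_smul {K : Type*} [Field K] {M : Matrix m m K}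
    (hM : IsUnit M.det) {X : Matrix m k K} {c : K} (hc : c ≠ 0) (h : M * X = c • X) :
    M⁻¹ * X = c⁻¹ • X := by
  calc M⁻¹ * X = c⁻¹ • (M⁻¹ * (c • X)) := by
        rw [Matrix.mul_smul, smul_smul, inv_mul_cancel₀ hc, one_smul]
    _ = c⁻¹ • X := by rw [← h, nonsing_inv_mul_cancel_left _ _ hM]

lemma posDef_mul_mul_transpose_add_smul_one (W : Matrix m n ℝ) {B : Matrix n n ℝ}
    (hB : B.PosSemidef) {c : ℝ} (hc : 0 < c) :
    (W * B * Wᵀ + c • (1 : Matrix m m ℝ)).PosDef :=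
  PosDef.posSemidef_add (by simpa using hB.mul_mul_conjTranspose_same W) (PosDef.one.smul hc)

end Matrix

theorem stmt_4_general {s p : ℕ}
    (Wt : Matrix (Fin s) (Fin 2) ℝ) (Wc : Matrix (Fin s) (Fin p) ℝ)
    (horth : Wtᵀ * Wc = 0)
    (St : Matrix (Fin 2) (Fin 2) ℝ) (hSt : St.PosDef)
    (σv : ℝ) (hσv : 0 < σv)
    (Kcal : Matrix (Fin 2) (Fin s) ℝ)
    (hKcal : Kcal = St * Wtᵀ * (Wt * St * Wtᵀ + σv ^ 2 • (1 : Matrix (Fin s) (Fin s) ℝ))⁻¹) :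
    Kcal * Wc = 0 := by
  have hσv2 : 0 < σv ^ 2 := pow_pos hσv 2
  have hM := posDef_mul_mul_transpose_add_smul_one Wt hSt.posSemidef hσv2
  have hinv := nonsing_inv_mul_eq_inv_smul_of_mul_eq_smul hM.det_pos.ne'.isUnit hσv2.ne'
    (mul_mul_transpose_add_smul_one_mul_of_transpose_mul_eq_zero Wt St _ horth)
  rw [hKcal, Matrix.mul_assoc, hinv, Matrix.mul_smul, Matrix.mul_assoc, horth, Matrix.mul_zero,
    smul_zero]

/-- If gaze-dependent and subject-dependent appearance variations are orthogonal
(`Wtᵀ Wc = 0`), the ideal-calibration estimator `K_cal = Σt Wtᵀ (Wt Σt Wtᵀ + σv² I)⁻¹`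
annihilates the column space of `Wc`: `K_cal Wc = 0`. -/
theorem stmt_4 {s p : ℕ} (hs : 1 ≤ s) (hp : 1 ≤ p)
    (Wt : Matrix (Fin s) (Fin 2) ℝ) (Wc : Matrix (Fin s) (Fin p) ℝ)
    (horth : Wtᵀ * Wc = 0)
    (St : Matrix (Fin 2) (Fin 2) ℝ) (hSt : St.PosDef)
    (σv : ℝ) (hσv : 0 < σv)
    (Kcal : Matrix (Fin 2) (Fin s) ℝ)
    (hKcal : Kcal = St * Wtᵀ * (Wt * St * Wtᵀ + σv ^ 2 • (1 : Matrix (Fin s) (Fin s) ℝ))⁻¹) :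
    Kcal * Wc = 0 :=
  stmt_4_general Wt Wc horth St hSt σv hσv Kcal hKcal
end

section
/- Let s, p ≥ 1, let W_t ∈ ℝ^{s×2} and W_c ∈ ℝ^{s×p} with W_tᵀ W_c = 0, let Σ_t ∈ ℝ^{2×2} and Σ̂_c ∈ ℝ^{p×p} be symmetric positive definite, let σ_v > 0, and let B ∈ ℝ^{2×p} be arbitrary. Then (Σ_t W_tᵀ + B W_cᵀ)(W_t Σ_t W_tᵀ + W_c Σ̂_c W_cᵀ + σ_v² I_s)⁻¹ = K_cal + ΔK, where K_cal = Σ_t W_tᵀ (W_t Σ_t W_tᵀ + σ_v² I_s)⁻¹ and ΔK = σ_v⁻² ( B W_cᵀ − B W_cᵀ W_c (σ_v² Σ̂_c⁻¹ + W_cᵀ W_c)⁻¹ W_cᵀ ). -/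
/-!
Write `c = σv²`, `Mt = Wt Σt Wtᵀ + c I` and `Mc = Wc Σ̂c Wcᵀ + c I`. Because `Wtᵀ Wc = 0`, the
matrix `Mt` acts on the columns of `Wc` as multiplication by `c`, so `Wtᵀ Mt⁻¹ Wc = 0`; hence
`Wtᵀ Mt⁻¹ M = Wtᵀ` for the full matrix `M = Wt Σt Wtᵀ + Wc Σ̂c Wcᵀ + c I`, i.e.
`Wtᵀ M⁻¹ = Wtᵀ Mt⁻¹`, and symmetrically `Wcᵀ M⁻¹ = Wcᵀ Mc⁻¹`. The first term gives `K_cal`,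
and the Woodbury identity `Mc⁻¹ = c⁻¹ (I - Wc (c Σ̂c⁻¹ + Wcᵀ Wc)⁻¹ Wcᵀ)` turns the second into `ΔK`.
-/

open Matrix

namespace Matrix

section Field

variable {K : Type*} [Field K] {l m n : Type*} [Fintype m] [Fintype n] [DecidableEq n]

theorem inv_mul_mul_transpose_add_smul_one [DecidableEq m] {c : K} (hc : c ≠ 0)
    (W : Matrix n m K) {S : Matrix m m K} (hS : IsUnit S.det)
    (hN : IsUnit (c • S⁻¹ + Wᵀ * W).det) :
    (W * S * Wᵀ + c • 1)⁻¹ = c⁻¹ • (1 - W * (c • S⁻¹ + Wᵀ * W)⁻¹ * Wᵀ) := by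
  refine inv_eq_right_inv ?_
  have hW : (W * S * Wᵀ + c • 1) * W = W * S * (c • S⁻¹ + Wᵀ * W) := by
    rw [Matrix.mul_add, Matrix.mul_smul, mul_nonsing_inv_cancel_right _ _ hS]
    simp only [Matrix.add_mul, Matrix.mul_assoc, Matrix.smul_mul, Matrix.one_mul]
    abel
  rw [Matrix.mul_smul, Matrix.mul_sub, Matrix.mul_one, ← Matrix.mul_assoc, ← Matrix.mul_assoc, hW,
    mul_nonsing_inv_cancel_right _ _ hN, add_sub_cancel_left, smul_smul, inv_mul_cancel₀ hc,
    one_smul]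

theorem inv_mul_eq_inv_smul_of_transpose_mul_eq_zero {c : K} (hc : c ≠ 0) (U : Matrix n m K)
    (S : Matrix m m K) {V : Matrix n l K} (hUV : Uᵀ * V = 0)
    (hA : IsUnit (U * S * Uᵀ + c • 1).det) :
    (U * S * Uᵀ + c • 1)⁻¹ * V = c⁻¹ • V := by
  have hAV : (U * S * Uᵀ + c • 1) * V = c • V := by
    rw [Matrix.add_mul, Matrix.mul_assoc, hUV, Matrix.mul_zero, zero_add, Matrix.smul_mul,
      Matrix.one_mul]
  calc (U * S * Uᵀ + c • 1)⁻¹ * V = c⁻¹ • ((U * S * Uᵀ + c • 1)⁻¹ * (c • V)) := by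
        rw [Matrix.mul_smul, smul_smul, inv_mul_cancel₀ hc, one_smul]
    _ = c⁻¹ • V := by rw [← hAV, nonsing_inv_mul_cancel_left _ _ hA]

theorem transpose_mul_inv_add_of_transpose_mul_eq_zero [Fintype l] {c : K} (hc : c ≠ 0)
    (U : Matrix n m K) (S : Matrix m m K) (V : Matrix n l K) (T : Matrix l l K)
    (hUV : Uᵀ * V = 0) (hA : IsUnit (U * S * Uᵀ + c • 1).det)
    (hM : IsUnit (U * S * Uᵀ + V * T * Vᵀ + c • 1).det) :
    Uᵀ * (U * S * Uᵀ + V * T * Vᵀ + c • 1)⁻¹ = Uᵀ * (U * S * Uᵀ + c • 1)⁻¹ := by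
  have hUAV : Uᵀ * (U * S * Uᵀ + c • 1)⁻¹ * V = 0 := by
    rw [Matrix.mul_assoc, inv_mul_eq_inv_smul_of_transpose_mul_eq_zero hc U S hUV hA,
      Matrix.mul_smul, hUV, smul_zero]
  have hleft : Uᵀ * (U * S * Uᵀ + c • 1)⁻¹ * (U * S * Uᵀ + V * T * Vᵀ + c • 1) = Uᵀ := by
    rw [add_right_comm, Matrix.mul_add, nonsing_inv_mul_cancel_right _ _ hA, ← Matrix.mul_assoc,
      ← Matrix.mul_assoc, hUAV, Matrix.zero_mul, Matrix.zero_mul, add_zero]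
  calc Uᵀ * (U * S * Uᵀ + V * T * Vᵀ + c • 1)⁻¹
      = Uᵀ * (U * S * Uᵀ + c • 1)⁻¹ * (U * S * Uᵀ + V * T * Vᵀ + c • 1) *
          (U * S * Uᵀ + V * T * Vᵀ + c • 1)⁻¹ := by rw [hleft]
    _ = Uᵀ * (U * S * Uᵀ + c • 1)⁻¹ := mul_nonsing_inv_cancel_right _ _ hM

end Field

section Real

variable {m n : Type*}

theorem PosSemidef.mul_mul_transpose_same_s7 [Fintype m] [Fintype n] {S : Matrix m m ℝ} (hS : S.PosSemidef)
    (W : Matrix n m ℝ) : (W * S * Wᵀ).PosSemidef := by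
  simpa using hS.mul_mul_conjTranspose_same W

theorem PosSemidef.posDef_add_smul_one [DecidableEq n] {A : Matrix n n ℝ} (hA : A.PosSemidef) {c : ℝ}
    (hc : 0 < c) : (A + c • 1).PosDef :=
  PosDef.posSemidef_add hA (PosDef.one.smul hc)

theorem PosDef.isUnit_det [Fintype n] [DecidableEq n] {A : Matrix n n ℝ} (hA : A.PosDef) : IsUnit A.det :=
  (isUnit_iff_isUnit_det A).1 hA.isUnit

end Real

end Matrix

theorem stmt_7_general {s p : ℕ}
    (Wt : Matrix (Fin s) (Fin 2) ℝ) (Wc : Matrix (Fin s) (Fin p) ℝ)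
    (horth : Wtᵀ * Wc = 0)
    (St : Matrix (Fin 2) (Fin 2) ℝ) (Schat : Matrix (Fin p) (Fin p) ℝ)
    (hSt : St.PosDef) (hSchat : Schat.PosDef)
    (σv : ℝ) (hσv : 0 < σv)
    (B : Matrix (Fin 2) (Fin p) ℝ)
    (Kcal ΔK : Matrix (Fin 2) (Fin s) ℝ)
    (hKcal : Kcal = St * Wtᵀ * (Wt * St * Wtᵀ + σv ^ 2 • (1 : Matrix (Fin s) (Fin s) ℝ))⁻¹)
    (hΔK : ΔK = (σv ^ 2)⁻¹ •
      (B * Wcᵀ - B * Wcᵀ * Wc * (σv ^ 2 • Schat⁻¹ + Wcᵀ * Wc)⁻¹ * Wcᵀ)) :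
    (St * Wtᵀ + B * Wcᵀ) *
      (Wt * St * Wtᵀ + Wc * Schat * Wcᵀ + σv ^ 2 • (1 : Matrix (Fin s) (Fin s) ℝ))⁻¹ =
      Kcal + ΔK := by
  have hc : 0 < σv ^ 2 := by positivity
  have hWtSt := hSt.posSemidef.mul_mul_transpose_same_s7 Wt
  have hWcS := hSchat.posSemidef.mul_mul_transpose_same_s7 Wc
  have hMt := (hWtSt.posDef_add_smul_one hc).isUnit_det
  have hMc := (hWcS.posDef_add_smul_one hc).isUnit_det
  have hM := ((hWtSt.add hWcS).posDef_add_smul_one hc).isUnit_det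
  have hN : (σv ^ 2 • Schat⁻¹ + Wcᵀ * Wc).PosDef := by
    simpa using (hSchat.inv.smul hc).add_posSemidef (posSemidef_conjTranspose_mul_self Wc)
  have horth' : Wcᵀ * Wt = 0 := by
    rw [← transpose_transpose Wt, ← transpose_mul, horth, transpose_zero]
  have hWtM := transpose_mul_inv_add_of_transpose_mul_eq_zero hc.ne' Wt St Wc Schat horth hMt hM
  have hWcM := transpose_mul_inv_add_of_transpose_mul_eq_zero hc.ne' Wc Schat Wt St horth' hMc
    (by rwa [add_comm (Wc * _ * _)])
  rw [add_comm (Wc * _ * _)] at hWcM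
  rw [Matrix.add_mul, Matrix.mul_assoc St, Matrix.mul_assoc B, hWtM, hWcM,
    inv_mul_mul_transpose_add_smul_one hc.ne' Wc hSchat.isUnit_det hN.isUnit_det, hKcal, hΔK]
  simp only [Matrix.mul_assoc, Matrix.mul_smul, Matrix.mul_sub, Matrix.mul_one]

/-- Decomposition from the proof of Theorem 2: the limiting value of the estimator trained
without gaze decomposition satisfies
`(Σt Wtᵀ + B Wcᵀ)(Wt Σt Wtᵀ + Wc Σ̂c Wcᵀ + σv² I)⁻¹ = K_cal + ΔK`, where
`K_cal = Σt Wtᵀ (Wt Σt Wtᵀ + σv² I)⁻¹` and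
`ΔK = σv⁻² (B Wcᵀ − B Wcᵀ Wc (σv² Σ̂c⁻¹ + Wcᵀ Wc)⁻¹ Wcᵀ)`. -/
theorem stmt_7 {s p : ℕ} (hs : 1 ≤ s) (hp : 1 ≤ p)
    (Wt : Matrix (Fin s) (Fin 2) ℝ) (Wc : Matrix (Fin s) (Fin p) ℝ)
    (horth : Wtᵀ * Wc = 0)
    (St : Matrix (Fin 2) (Fin 2) ℝ) (Schat : Matrix (Fin p) (Fin p) ℝ)
    (hSt : St.PosDef) (hSchat : Schat.PosDef)
    (σv : ℝ) (hσv : 0 < σv)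
    (B : Matrix (Fin 2) (Fin p) ℝ)
    (Kcal ΔK : Matrix (Fin 2) (Fin s) ℝ)
    (hKcal : Kcal = St * Wtᵀ * (Wt * St * Wtᵀ + σv ^ 2 • (1 : Matrix (Fin s) (Fin s) ℝ))⁻¹)
    (hΔK : ΔK = (σv ^ 2)⁻¹ •
      (B * Wcᵀ - B * Wcᵀ * Wc * (σv ^ 2 • Schat⁻¹ + Wcᵀ * Wc)⁻¹ * Wcᵀ)) :
    (St * Wtᵀ + B * Wcᵀ) *
      (Wt * St * Wtᵀ + Wc * Schat * Wcᵀ + σv ^ 2 • (1 : Matrix (Fin s) (Fin s) ℝ))⁻¹ =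
      Kcal + ΔK :=
  stmt_7_general Wt Wc horth St Schat hSt hSchat σv hσv B Kcal ΔK hKcal hΔK
end
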